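/- arXiv:2207.03310 — 4 statements merged into one kernel-verified Lean document; each statement's English description precedes it below -/
import Mathlib

section
/- Let $(\Gamma,p)$ be a unidimensional conic framework ($d=1$) with distinct positions and suppose the undirected graphs $G_+$ (from increasing arcs, $x_u < x_w$) and $G_-$ (from decreasing arcs, $x_u > x_w$) are both connected. Then every admissible instantaneous velocity $q$ (satisfying $(x_u-x_w)(v_u-v_w) + |x_u-x_w|(\alpha_w-\alpha_u) = 0$ for each arc $uw$) is trivial: all $v_u$ are equal and all $\alpha_u$ are equal. -/
/-- Undirected graph of increasing arcs. -/
def Gplus {V : Type*} [DecidableEq V] (E : Finset (V × V)) (x : V → ℝ) : SimpleGraph V :=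
  SimpleGraph.fromRel (fun u w => (u, w) ∈ E ∧ x u < x w)

/-- Undirected graph of decreasing arcs. -/
def Gminus {V : Type*} [DecidableEq V] (E : Finset (V × V)) (x : V → ℝ) : SimpleGraph V :=
  SimpleGraph.fromRel (fun u w => (u, w) ∈ E ∧ x u > x w)

/-- An instantaneous velocity `(v, α)` is admissible for the unidimensional conic
framework with arcs `E` and positions `x`. -/
def Admissible {V : Type*} (E : Finset (V × V)) (x v α : V → ℝ) : Prop :=
  ∀ e ∈ E, (x e.1 - x e.2) * (v e.1 - v e.2) + |x e.1 - x e.2| * (α e.2 - α e.1) = 0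

/-- A function invariant along edges is constant on a connected graph. -/
lemma const_of_connected {V : Type*} {G : SimpleGraph V} (hG : G.Connected)
    (f : V → ℝ) (hf : ∀ a b, G.Adj a b → f a = f b) : ∀ u w, f u = f w := by
  intro u w
  obtain ⟨p⟩ := hG.preconnected u w
  induction p with
  | nil => rfl
  | cons h _ ih => exact (hf _ _ h).trans ih

/-- If both `G₊` and `G₋` are connected, every admissible instantaneous velocity of a
unidimensional conic framework with distinct positions is trivial. -/
theorem stmt_4 {V : Type*} [DecidableEq V] (E : Finset (V × V)) (x β : V → ℝ)
    (hdist : Function.Injective x)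
    (hplus : (Gplus E x).Connected) (hminus : (Gminus E x).Connected)
    (v α : V → ℝ) (hq : Admissible E x v α) :
    (∀ u w : V, v u = v w) ∧ (∀ u w : V, α u = α w) := by
  have hp : ∀ a b, (Gplus E x).Adj a b → v a + α a = v b + α b := by
    intro a b hab
    rcases hab with ⟨hne, ⟨hE, hx⟩ | ⟨hE, hx⟩⟩
    · have h := hq (a, b) hE
      simp only at h
      rw [abs_of_neg (by linarith : x a - x b < 0)] at h
      have hxne : x a - x b ≠ 0 := by linarith
      have key : (x a - x b) * ((v a + α a) - (v b + α b)) = 0 := by linear_combination h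
      rcases mul_eq_zero.mp key with h' | h'
      · exact absurd h' hxne
      · linarith
    · have h := hq (b, a) hE
      simp only at h
      rw [abs_of_neg (by linarith : x b - x a < 0)] at h
      have hxne : x b - x a ≠ 0 := by linarith
      have key : (x b - x a) * ((v b + α b) - (v a + α a)) = 0 := by linear_combination h
      rcases mul_eq_zero.mp key with h' | h'
      · exact absurd h' hxne
      · linarith
  have hm : ∀ a b, (Gminus E x).Adj a b → v a - α a = v b - α b := by
    intro a b hab
    rcases hab with ⟨hne, ⟨hE, hx⟩ | ⟨hE, hx⟩⟩
    · have h := hq (a, b) hE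
      simp only at h
      rw [abs_of_pos (by linarith : (0:ℝ) < x a - x b)] at h
      have hxne : x a - x b ≠ 0 := by linarith
      have key : (x a - x b) * ((v a - α a) - (v b - α b)) = 0 := by linear_combination h
      rcases mul_eq_zero.mp key with h' | h'
      · exact absurd h' hxne
      · linarith
    · have h := hq (b, a) hE
      simp only at h
      rw [abs_of_pos (by linarith : (0:ℝ) < x b - x a)] at h
      have hxne : x b - x a ≠ 0 := by linarith
      have key : (x b - x a) * ((v b - α b) - (v a - α a)) = 0 := by linear_combination h
      rcases mul_eq_zero.mp key with h' | h'
      · exact absurd h' hxne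
      · linarith
  have hP := const_of_connected hplus (fun u => v u + α u) hp
  have hM := const_of_connected hminus (fun u => v u - α u) hm
  constructor
  · intro u w; have h1 := hP u w; have h2 := hM u w; linarith
  · intro u w; have h1 := hP u w; have h2 := hM u w; linarith
end

section
/- Let $(\Gamma,p)$ be a unidimensional conic framework whose graph $G_-$ of decreasing arcs is disconnected. Then there exists a non-trivial admissible instantaneous velocity vector: namely, taking a set $U$ of vertices disconnected from its complement in $G_-$ and defining $q_u = (1,-1)$ for $u \in U$ and $q_u = (0,0)$ for $u \notin U$ yields a vector satisfying $(x_u-x_w)(v_u-v_w) + |x_u-x_w|(\alpha_w-\alpha_u) = 0$ for every arc $uw$, which is not of the form (all $v_u$ equal and all $\alpha_u$ equal). -/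
/-!
With `α = -v` the constraint on an arc `uw` factors as
`((x_u - x_w) + |x_u - x_w|) (v_u - v_w) = 0`, so it only bites on decreasing arcs, where it
asks `v_u = v_w`. The indicator of `U` is constant along every edge of `G₋`, hence
`(𝟙_U, -𝟙_U)` is admissible, and it is non-constant because `U` is nonempty and proper.
-/

theorem Gminus.adj_of_mem {V : Type*} [DecidableEq V] {E : Finset (V × V)} {x : V → ℝ}
    {e : V × V} (he : e ∈ E) (hx : x e.2 < x e.1) : (Gminus E x).Adj e.1 e.2 :=
  (SimpleGraph.fromRel_adj _ _ _).2 ⟨fun h => hx.ne' (congrArg x h), Or.inl ⟨he, hx⟩⟩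

theorem admissible_neg_iff {V : Type*} (E : Finset (V × V)) (x v : V → ℝ) :
    Admissible E x v (-v) ↔ ∀ e ∈ E, x e.2 < x e.1 → v e.1 = v e.2 := by
  refine forall₂_congr fun e _ => ?_
  have hfactor : (x e.1 - x e.2) * (v e.1 - v e.2) + |x e.1 - x e.2| * ((-v) e.2 - (-v) e.1)
      = (x e.1 - x e.2 + |x e.1 - x e.2|) * (v e.1 - v e.2) := by
    simp only [Pi.neg_apply]; ring
  have hvanish : x e.1 - x e.2 + |x e.1 - x e.2| = 0 ↔ ¬ x e.2 < x e.1 := by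
    rw [add_eq_zero_iff_eq_neg', abs_eq_neg_self, not_lt, sub_nonpos]
  rw [hfactor, mul_eq_zero, sub_eq_zero, hvanish, or_iff_not_imp_left, not_not]

theorem SimpleGraph.mem_iff_mem_of_adj_of_forall_not_adj {V : Type*} {G : SimpleGraph V}
    {U : Finset V} (hcut : ∀ u ∈ U, ∀ w ∉ U, ¬ G.Adj u w) {a b : V} (hab : G.Adj a b) :
    a ∈ U ↔ b ∈ U :=
  ⟨fun ha => by_contra fun hb => hcut a ha b hb hab,
    fun hb => by_contra fun ha => hcut b hb a ha hab.symm⟩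

theorem stmt_5_general {V : Type*} [Fintype V] [DecidableEq V] (E : Finset (V × V)) (x : V → ℝ)
    (U : Finset V) (hne : U.Nonempty) (hproper : U ≠ Finset.univ)
    (hcut : ∀ u ∈ U, ∀ w ∉ U, ¬ (Gminus E x).Adj u w) :
    Admissible E x (fun u => if u ∈ U then (1 : ℝ) else 0)
        (fun u => if u ∈ U then (-1 : ℝ) else 0) ∧
    ¬ ((∀ u w : V, (if u ∈ U then (1 : ℝ) else 0) = (if w ∈ U then (1 : ℝ) else 0)) ∧
       (∀ u w : V, (if u ∈ U then (-1 : ℝ) else 0) = (if w ∈ U then (-1 : ℝ) else 0))) := by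
  set v : V → ℝ := fun u => if u ∈ U then 1 else 0
  have hα : (fun u => if u ∈ U then (-1 : ℝ) else 0) = -v := by
    funext u; by_cases hu : u ∈ U <;> simp [v, hu]
  obtain ⟨u, hu⟩ := hne
  obtain ⟨w, hw⟩ : ∃ w, w ∉ U := by simpa [Finset.eq_univ_iff_forall] using hproper
  refine ⟨hα ▸ (admissible_neg_iff E x v).2 fun e he hx => ?_,
    fun ⟨hv, _⟩ => by simpa [hu, hw] using hv u w⟩
  simp only [v, (SimpleGraph.mem_iff_mem_of_adj_of_forall_not_adj hcut (Gminus.adj_of_mem he hx))]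

/-- If `G₋` is disconnected, witnessed by a nonempty proper subset `U` with no `G₋`
edge to its complement, then the velocity equal to `(1, -1)` on `U` and `(0, 0)`
outside is admissible and non-trivial. -/
theorem stmt_5 {V : Type*} [Fintype V] [DecidableEq V] (E : Finset (V × V)) (x β : V → ℝ)
    (U : Finset V) (hne : U.Nonempty) (hproper : U ≠ Finset.univ)
    (hcut : ∀ u ∈ U, ∀ w ∉ U, ¬ (Gminus E x).Adj u w) :
    Admissible E x (fun u => if u ∈ U then (1 : ℝ) else 0)
        (fun u => if u ∈ U then (-1 : ℝ) else 0) ∧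
    ¬ ((∀ u w : V, (if u ∈ U then (1 : ℝ) else 0) = (if w ∈ U then (1 : ℝ) else 0)) ∧
       (∀ u w : V, (if u ∈ U then (-1 : ℝ) else 0) = (if w ∈ U then (-1 : ℝ) else 0))) :=
  stmt_5_general E x U hne hproper hcut
end

section
/- A unidimensional conic framework $(\Gamma, p)$ is infinitesimally rigid (every admissible instantaneous velocity vector is trivial) if and only if both $G_+$ and $G_-$ are connected. -/
/-- A function constant along edges is constant along walks. -/
lemma const_of_reachable {V : Type*} {G : SimpleGraph V} {f : V → ℝ}
    (h : ∀ a b, G.Adj a b → f a = f b) {u w : V} (hr : G.Reachable u w) : f u = f w := by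
  obtain ⟨p⟩ := hr
  induction p with
  | nil => rfl
  | cons h' _ ih => exact (h _ _ h').trans ih

/-- A disconnected graph admits a non-constant edge-constant function. -/
lemma exists_bad {V : Type*} [Nonempty V] (G : SimpleGraph V) (h : ¬ G.Connected) :
    ∃ f : V → ℝ, (∀ a b, G.Adj a b → f a = f b) ∧ ∃ u w : V, f u ≠ f w := by
  classical
  rw [SimpleGraph.connected_iff] at h
  push_neg at h
  have hp : ¬ G.Preconnected := fun hc => not_isEmpty_of_nonempty V (h hc)
  simp only [SimpleGraph.Preconnected, not_forall] at hp
  obtain ⟨u, w, hr⟩ := hp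
  refine ⟨fun z => if G.Reachable z w then 1 else 0, ?_, u, w, ?_⟩
  · intro a b hab
    have : G.Reachable a w ↔ G.Reachable b w :=
      ⟨fun h' => (hab.symm.reachable).trans h', fun h' => (hab.reachable).trans h'⟩
    simp [this]
  · simp only [if_neg hr, if_pos (SimpleGraph.Reachable.refl w)]; norm_num

/-- A unidimensional conic framework is infinitesimally rigid (every admissible
instantaneous velocity is trivial) iff both `G₊` and `G₋` are connected. -/
theorem stmt_6 {V : Type*} [Fintype V] [DecidableEq V] [Nonempty V]
    (E : Finset (V × V)) (x β : V → ℝ) :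
    (∀ v α : V → ℝ, Admissible E x v α →
        (∀ u w : V, v u = v w) ∧ (∀ u w : V, α u = α w)) ↔
    ((Gplus E x).Connected ∧ (Gminus E x).Connected) := by
  constructor
  · intro H
    constructor
    · by_contra hcon
      obtain ⟨f, hf, u, w, hne⟩ := exists_bad _ hcon
      have hadm : Admissible E x (fun z => f z / 2) (fun z => f z / 2) := by
        intro e he
        rcases lt_trichotomy (x e.1) (x e.2) with hlt | heq | hgt
        · have hadj : (Gplus E x).Adj e.1 e.2 := by
            simp only [Gplus, SimpleGraph.fromRel_adj]
            exact ⟨fun h => by rw [h] at hlt; exact lt_irrefl _ hlt, Or.inl ⟨he, hlt⟩⟩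
          have := hf _ _ hadj
          simp [this]
        · simp [heq]
        · have habs : |x e.1 - x e.2| = x e.1 - x e.2 := abs_of_pos (by linarith)
          rw [habs]; ring
      have := (H _ _ hadm).1 u w
      exact hne (by linarith)
    · by_contra hcon
      obtain ⟨f, hf, u, w, hne⟩ := exists_bad _ hcon
      have hadm : Admissible E x (fun z => f z / 2) (fun z => -(f z) / 2) := by
        intro e he
        rcases lt_trichotomy (x e.1) (x e.2) with hlt | heq | hgt
        · have habs : |x e.1 - x e.2| = -(x e.1 - x e.2) := abs_of_neg (by linarith)
          rw [habs]; ring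
        · simp [heq]
        · have hadj : (Gminus E x).Adj e.1 e.2 := by
            simp only [Gminus, SimpleGraph.fromRel_adj]
            exact ⟨fun h => by rw [h] at hgt; exact lt_irrefl _ hgt, Or.inl ⟨he, hgt⟩⟩
          have := hf _ _ hadj
          simp [this]
      have := (H _ _ hadm).1 u w
      exact hne (by linarith)
  · rintro ⟨hp, hm⟩ v α hadm
    have hs : ∀ a b, (Gplus E x).Adj a b → v a + α a = v b + α b := by
      intro a b hab
      simp only [Gplus, SimpleGraph.fromRel_adj] at hab
      rcases hab.2 with ⟨he, hlt⟩ | ⟨he, hlt⟩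
      · have heq := hadm (a, b) he
        simp only at heq
        have habs : |x a - x b| = -(x a - x b) := abs_of_neg (by linarith)
        rw [habs] at heq
        have h2 : (x a - x b) * ((v a + α a) - (v b + α b)) = 0 := by linear_combination heq
        rcases mul_eq_zero.mp h2 with h3 | h3
        · exact absurd h3 (by intro h'; linarith [sub_eq_zero.mp h'])
        · linarith
      · have heq := hadm (b, a) he
        simp only at heq
        have habs : |x b - x a| = -(x b - x a) := abs_of_neg (by linarith)
        rw [habs] at heq
        have h2 : (x b - x a) * ((v b + α b) - (v a + α a)) = 0 := by linear_combination heq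
        rcases mul_eq_zero.mp h2 with h3 | h3
        · exact absurd h3 (by intro h'; linarith [sub_eq_zero.mp h'])
        · linarith
    have hd : ∀ a b, (Gminus E x).Adj a b → v a - α a = v b - α b := by
      intro a b hab
      simp only [Gminus, SimpleGraph.fromRel_adj] at hab
      rcases hab.2 with ⟨he, hlt⟩ | ⟨he, hlt⟩
      · have heq := hadm (a, b) he
        simp only at heq
        have habs : |x a - x b| = x a - x b := abs_of_pos (by linarith)
        rw [habs] at heq
        have h2 : (x a - x b) * ((v a - α a) - (v b - α b)) = 0 := by linear_combination heq
        rcases mul_eq_zero.mp h2 with h3 | h3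
        · exact absurd h3 (by intro h'; linarith [sub_eq_zero.mp h'])
        · linarith
      · have heq := hadm (b, a) he
        simp only at heq
        have habs : |x b - x a| = x b - x a := abs_of_pos (by linarith)
        rw [habs] at heq
        have h2 : (x b - x a) * ((v b - α b) - (v a - α a)) = 0 := by linear_combination heq
        rcases mul_eq_zero.mp h2 with h3 | h3
        · exact absurd h3 (by intro h'; linarith [sub_eq_zero.mp h'])
        · linarith
    have hsc : ∀ u w : V, v u + α u = v w + α w := fun u w =>
      const_of_reachable hs (hp.preconnected u w)
    have hdc : ∀ u w : V, v u - α u = v w - α w := fun u w =>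
      const_of_reachable hd (hm.preconnected u w)
    exact ⟨fun u w => by linarith [hsc u w, hdc u w],
           fun u w => by linarith [hsc u w, hdc u w]⟩
end

section
/- Let $d \geq 2$, $E_H$ and $E_G$ disjoint sets of edges, and $A$ a square matrix of order $|E_H|$ whose entries are functions $\mathbb{R}^{dn} \to \mathbb{R}$ in $\mathcal{L}(E_G)$. Then for any generic configuration $p$, the matrix $B = D(H,p) + A(p)$ is invertible, where $D(H,p)$ is the diagonal matrix of distances $\|x_u - x_w\|$ over edges $uw \in E_H$. -/
open scoped BigOperators

/-- A family of real coordinates is generic if it is not a root of any nonzero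
polynomial with integer coefficients. -/
def Generic {ι : Type*} [Fintype ι] (x : ι → ℝ) : Prop :=
  ∀ P : MvPolynomial ι ℤ, P ≠ 0 → MvPolynomial.aeval x P ≠ 0

/-- The distance between the points `u` and `w` of the configuration `x`
(the `dn` coordinates are indexed by `Fin n × Fin d`). -/
noncomputable def dst {n d : ℕ} (x : Fin n × Fin d → ℝ) (u w : Fin n) : ℝ :=
  Real.sqrt (∑ i : Fin d, (x (u, i) - x (w, i)) ^ 2)

/-- A function belongs to `ℒ(E)` if it is a combination of products of distance
functions over subsets of `E`, with rational functions (with integer coefficients)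
as coefficients. -/
def MemL {n d : ℕ} (E : Finset (Fin n × Fin n)) (f : (Fin n × Fin d → ℝ) → ℝ) : Prop :=
  ∃ P Q : Finset (Fin n × Fin n) → MvPolynomial (Fin n × Fin d) ℤ,
    (∀ F, Q F ≠ 0) ∧
    ∀ x, f x = ∑ F ∈ E.powerset,
      (MvPolynomial.aeval x (P F) / MvPolynomial.aeval x (Q F)) *
        ∏ e ∈ F, dst x e.1 e.2

/-- Edge sets are normalized: each edge `(u,w)` satisfies `u < w`. -/
def Normalized {n : ℕ} (E : Finset (Fin n × Fin n)) : Prop := ∀ e ∈ E, e.1 < e.2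

open MvPolynomial

namespace Rig

variable {n d : ℕ}

/-- The squared-distance polynomial of an edge. -/
noncomputable def Qp (d : ℕ) (e : Fin n × Fin n) : MvPolynomial (Fin n × Fin d) ℤ :=
  ∑ j : Fin d, (X (e.1, j) - X (e.2, j)) ^ 2

lemma aeval_Qp (x : Fin n × Fin d → ℝ) (e : Fin n × Fin n) :
    aeval x (Qp d e) = ∑ j : Fin d, (x (e.1, j) - x (e.2, j)) ^ 2 := by
  simp [Qp]

lemma dst_sq (x : Fin n × Fin d → ℝ) (e : Fin n × Fin n) :
    dst x e.1 e.2 ^ 2 = aeval x (Qp d e) := by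
  rw [aeval_Qp, dst, Real.sq_sqrt]
  positivity

lemma Qp_ne_zero (hd : 2 ≤ d) {e : Fin n × Fin n} (he : e.1 ≠ e.2) : Qp d e ≠ 0 := by
  intro h
  have h2 := congrArg (aeval (fun v : Fin n × Fin d => if v.1 = e.1 then (1:ℝ) else 0)) h
  rw [aeval_Qp, map_zero] at h2
  simp [Ne.symm he] at h2
  omega

lemma Qp_injective (hd : 2 ≤ d) {e f : Fin n × Fin n} (he : e.1 < e.2) (hf : f.1 < f.2)
    (hne : e ≠ f) : Qp d e ≠ Qp d f := by
  have he' : (e.1 : ℕ) < (e.2 : ℕ) := he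
  have hf' : (f.1 : ℕ) < (f.2 : ℕ) := hf
  have hne' : ¬((e.1 : ℕ) = (f.1 : ℕ) ∧ (e.2 : ℕ) = (f.2 : ℕ)) := by
    rintro ⟨a, b⟩; exact hne (Prod.ext (Fin.ext a) (Fin.ext b))
  have hvert : ∃ v : Fin n, ((v = e.1 ∨ v = e.2) ∧ v ≠ f.1 ∧ v ≠ f.2) ∨
      ((v = f.1 ∨ v = f.2) ∧ v ≠ e.1 ∧ v ≠ e.2) := by
    by_cases h1 : (e.1:ℕ) ≠ (f.1:ℕ) ∧ (e.1:ℕ) ≠ (f.2:ℕ)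
    · exact ⟨e.1, Or.inl ⟨Or.inl rfl, Fin.ne_of_val_ne h1.1, Fin.ne_of_val_ne h1.2⟩⟩
    · by_cases h2 : (e.2:ℕ) ≠ (f.1:ℕ) ∧ (e.2:ℕ) ≠ (f.2:ℕ)
      · exact ⟨e.2, Or.inl ⟨Or.inr rfl, Fin.ne_of_val_ne h2.1, Fin.ne_of_val_ne h2.2⟩⟩
      · exfalso; push_neg at h1 h2; omega
  obtain ⟨v, hv⟩ := hvert
  intro h
  have h2 := congrArg (aeval (fun w : Fin n × Fin d => if w.1 = v then (1:ℝ) else 0)) h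
  rw [aeval_Qp, aeval_Qp] at h2
  have hde : e.1 ≠ e.2 := ne_of_lt he
  have hdf : f.1 ≠ f.2 := ne_of_lt hf
  rcases hv with ⟨hv1, hv2, hv3⟩ | ⟨hv1, hv2, hv3⟩
  · rcases hv1 with rfl | rfl
    · simp [Ne.symm hde, Ne.symm hv2, Ne.symm hv3] at h2; first | omega | (norm_cast at h2; omega)
    · simp [Ne.symm hde, Ne.symm hv2, Ne.symm hv3, hde] at h2; first | omega | (norm_cast at h2; omega)
  · rcases hv1 with rfl | rfl
    · simp [Ne.symm hdf, Ne.symm hv2, Ne.symm hv3] at h2; first | omega | (norm_cast at h2; omega)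
    · simp [Ne.symm hdf, Ne.symm hv2, Ne.symm hv3, hdf] at h2; first | omega | (norm_cast at h2; omega)

end Rig
open scoped BigOperators
open MvPolynomial

namespace Rig2

variable {ι : Type*} [Fintype ι]

/-- The base field: subfield of ℝ generated by the coordinates. -/
noncomputable def K0 (p : ι → ℝ) : Subfield ℝ := Subfield.closure (Set.range p)

lemma aeval_mem_K0 (p : ι → ℝ) (P : MvPolynomial ι ℤ) : (aeval p P : ℝ) ∈ K0 p := by
  induction P using MvPolynomial.induction_on with
  | C a => simpa using intCast_mem (K0 p) a
  | add f g hf hg => rw [map_add]; exact add_mem hf hg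
  | mul_X f v hf =>
      rw [map_mul, aeval_X]
      exact mul_mem hf (Subfield.subset_closure ⟨v, rfl⟩)

/-- Every element of `K0 p` is a ratio of integer polynomials evaluated at `p`. -/
lemma K0_repr (p : ι → ℝ) {x : ℝ} (hx : x ∈ K0 p) :
    ∃ F G : MvPolynomial ι ℤ, (aeval p G : ℝ) ≠ 0 ∧ x = aeval p F / aeval p G := by
  let T : Subfield ℝ :=
    { carrier := {x | ∃ F G : MvPolynomial ι ℤ, (aeval p G : ℝ) ≠ 0 ∧ x = aeval p F / aeval p G}
      zero_mem' := ⟨0, 1, by simp⟩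
      one_mem' := ⟨1, 1, by simp⟩
      add_mem' := by
        rintro a b ⟨F1, G1, h1, rfl⟩ ⟨F2, G2, h2, rfl⟩
        refine ⟨F1 * G2 + F2 * G1, G1 * G2, by simp [h1, h2], ?_⟩
        rw [map_add, map_mul, map_mul, map_mul]
        field_simp
      mul_mem' := by
        rintro a b ⟨F1, G1, h1, rfl⟩ ⟨F2, G2, h2, rfl⟩
        refine ⟨F1 * F2, G1 * G2, by simp [h1, h2], ?_⟩
        rw [map_mul, map_mul]
        field_simp
      neg_mem' := by
        rintro a ⟨F, G, h, rfl⟩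
        exact ⟨-F, G, h, by rw [map_neg]; ring⟩
      inv_mem' := by
        rintro a ⟨F, G, h, rfl⟩
        by_cases hF : (aeval p F : ℝ) = 0
        · exact ⟨0, 1, by simp, by simp [hF]⟩
        · exact ⟨G, F, hF, by rw [inv_div]⟩ }
  have : K0 p ≤ T := by
    rw [K0, Subfield.closure_le]
    rintro y ⟨v, rfl⟩
    exact ⟨X v, 1, by simp, by simp⟩
  exact this hx

/-- Quadratic extension: every element of `K(α)` with `α² ∈ K`, `α ∉ K`
is of the form `a + b·α`. -/
lemma quad_repr (K : Subfield ℝ) (α : ℝ) (hα2 : α ^ 2 ∈ K) (hα : α ∉ K)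
    {x : ℝ} (hx : x ∈ Subfield.closure (↑K ∪ {α})) :
    ∃ a b : ℝ, a ∈ K ∧ b ∈ K ∧ x = a + b * α := by
  have key : ∀ a b : ℝ, a ∈ K → b ∈ K → a + b * α ≠ 0 → a ^ 2 - b ^ 2 * α ^ 2 ≠ 0 := by
    intro a b ha hb hne h0
    have : (a - b * α) * (a + b * α) = 0 := by ring_nf; ring_nf at h0; linarith
    rcases mul_eq_zero.1 this with h | h
    · -- a = b α
      by_cases hb0 : b = 0
      · apply hne; subst hb0; simpa using by linarith [h]
      · apply hα
        have : α = a / b := by field_simp; linarith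
        rw [this]; exact div_mem ha hb
    · exact hne h
  let T : Subfield ℝ :=
    { carrier := {x | ∃ a b : ℝ, a ∈ K ∧ b ∈ K ∧ x = a + b * α}
      zero_mem' := ⟨0, 0, zero_mem _, zero_mem _, by ring⟩
      one_mem' := ⟨1, 0, one_mem _, zero_mem _, by ring⟩
      add_mem' := by
        rintro x y ⟨a, b, ha, hb, rfl⟩ ⟨c, e, hc, he, rfl⟩
        exact ⟨a + c, b + e, add_mem ha hc, add_mem hb he, by ring⟩
      mul_mem' := by
        rintro x y ⟨a, b, ha, hb, rfl⟩ ⟨c, e, hc, he, rfl⟩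
        refine ⟨a * c + b * e * α ^ 2, a * e + b * c,
          add_mem (mul_mem ha hc) (mul_mem (mul_mem hb he) hα2),
          add_mem (mul_mem ha he) (mul_mem hb hc), by ring⟩
      neg_mem' := by
        rintro x ⟨a, b, ha, hb, rfl⟩
        exact ⟨-a, -b, neg_mem ha, neg_mem hb, by ring⟩
      inv_mem' := by
        rintro x ⟨a, b, ha, hb, rfl⟩
        by_cases h0 : a + b * α = 0
        · exact ⟨0, 0, zero_mem _, zero_mem _, by simp [h0]⟩
        · have hD : a ^ 2 - b ^ 2 * α ^ 2 ≠ 0 := key a b ha hb h0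
          refine ⟨a / (a ^ 2 - b ^ 2 * α ^ 2), -b / (a ^ 2 - b ^ 2 * α ^ 2),
            div_mem ha (sub_mem (pow_mem ha 2) (mul_mem (pow_mem hb 2) hα2)),
            div_mem (neg_mem hb) (sub_mem (pow_mem ha 2) (mul_mem (pow_mem hb 2) hα2)), ?_⟩
          rw [eq_comm]
          apply eq_inv_of_mul_eq_one_left
          field_simp
          ring }
  have hle : Subfield.closure (↑K ∪ {α}) ≤ T := by
    rw [Subfield.closure_le]
    rintro y (hy | hy)
    · exact ⟨y, 0, hy, zero_mem _, by ring⟩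
    · rw [Set.mem_singleton_iff] at hy
      exact ⟨0, 1, zero_mem _, one_mem _, by rw [hy]; ring⟩
  exact hle hx

end Rig2

namespace Rig3

/-- orthogonal vector of the same length -/
lemma exists_mu {d : ℕ} (hd : 2 ≤ d) (c : Fin d → ℝ) (hc : c ⟨0, by omega⟩ ≠ 0) :
    ∃ μ : Fin d → ℝ, ∑ j, c j * μ j = 0 ∧ ∑ j, μ j ^ 2 = ∑ j, c j ^ 2 := by
  set i0 : Fin d := ⟨0, by omega⟩
  set i1 : Fin d := ⟨1, by omega⟩
  have hne : i0 ≠ i1 := by simp [i0, i1, Fin.ext_iff]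
  have hT : 0 < c i0 ^ 2 + c i1 ^ 2 := by positivity
  set k : ℝ := Real.sqrt ((∑ j, c j ^ 2) / (c i0 ^ 2 + c i1 ^ 2)) with hk
  have hk2 : k ^ 2 = (∑ j, c j ^ 2) / (c i0 ^ 2 + c i1 ^ 2) := by
    rw [hk, Real.sq_sqrt]
    positivity
  refine ⟨fun j => if j = i0 then -(c i1) * k else if j = i1 then c i0 * k else 0, ?_, ?_⟩
  · have key : ∀ j, c j * (if j = i0 then -(c i1) * k else if j = i1 then c i0 * k else 0)
        = (if j ∈ ({i0, i1} : Finset (Fin d)) then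
            c j * (if j = i0 then -(c i1) * k else if j = i1 then c i0 * k else 0) else 0) := by
      intro j
      by_cases h0 : j = i0 <;> by_cases h1 : j = i1 <;> simp [h0, h1]
    rw [Finset.sum_congr rfl (fun j _ => key j), Finset.sum_ite_mem, Finset.univ_inter,
      Finset.sum_pair hne]
    simp [hne, Ne.symm hne]
    ring
  · have key : ∀ j, (if j = i0 then -(c i1) * k else if j = i1 then c i0 * k else 0) ^ 2
        = (if j ∈ ({i0, i1} : Finset (Fin d)) then
            (if j = i0 then -(c i1) * k else if j = i1 then c i0 * k else 0) ^ 2 else 0) := by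
      intro j
      by_cases h0 : j = i0 <;> by_cases h1 : j = i1 <;> simp [h0, h1]
    rw [Finset.sum_congr rfl (fun j _ => key j), Finset.sum_ite_mem, Finset.univ_inter,
      Finset.sum_pair hne]
    have : (-(c i1) * k) ^ 2 + (c i0 * k) ^ 2 = (c i0 ^ 2 + c i1 ^ 2) * k ^ 2 := by ring
    simp only [hne, Ne.symm hne, if_pos rfl, if_neg, reduceIte]
    rw [this, hk2]
    field_simp

/-- complex square-sum decomposition -/
lemma csum {d : ℕ} (a b : Fin d → ℝ) :
    ∑ j, ((a j : ℂ) + Complex.I * (b j : ℂ)) ^ 2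
      = ((∑ j, (a j ^ 2 - b j ^ 2) : ℝ) : ℂ) + Complex.I * ((∑ j, 2 * a j * b j : ℝ) : ℂ) := by
  have hterm : ∀ j, ((a j : ℂ) + Complex.I * (b j : ℂ)) ^ 2
      = (((a j ^ 2 - b j ^ 2 : ℝ)) : ℂ) + Complex.I * ((2 * a j * b j : ℝ) : ℂ) := by
    intro j
    have h : ((a j : ℂ) + Complex.I * (b j : ℂ)) ^ 2
        = ((a j:ℂ)^2 - (b j:ℂ)^2) + Complex.I*(2*(a j:ℂ)*(b j:ℂ)) + (Complex.I^2+1)*(b j:ℂ)^2 := by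
      ring
    rw [h, Complex.I_sq]
    push_cast
    ring
  rw [Finset.sum_congr rfl (fun j _ => hterm j), Finset.sum_add_distrib, ← Finset.mul_sum]
  push_cast
  ring

/-- nonvanishing of a complex number with nonzero real part -/
lemma cne {x y : ℝ} (h : x ≠ 0) : ((x : ℂ) + Complex.I * (y : ℂ)) ≠ 0 := by
  intro hh
  apply h
  have := congrArg Complex.re hh
  simpa using this

/-- evaluation commutes with `aeval` into polynomials -/
lemma eval_aeval {ι : Type*} (v : ι → Polynomial ℂ) (z : ℂ) (P : MvPolynomial ι ℤ) :
    (MvPolynomial.aeval v P).eval z = MvPolynomial.aeval (fun i => (v i).eval z) P := by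
  have := MvPolynomial.comp_aeval v ((Polynomial.evalRingHom z).toIntAlgHom)
  exact AlgHom.congr_fun this P

/-- casting commutes with `aeval` -/
lemma cast_aeval {ι : Type*} (p : ι → ℝ) (P : MvPolynomial ι ℤ) :
    MvPolynomial.aeval (fun i => ((p i : ℂ))) P = ((MvPolynomial.aeval p P : ℝ) : ℂ) := by
  have := MvPolynomial.comp_aeval p ((algebraMap ℝ ℂ)).toIntAlgHom
  exact (AlgHom.congr_fun this P).symm

/-- the split of a sum of squares of linear polynomials -/
lemma polysq {d : ℕ} (a b : Fin d → ℂ) :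
    ∑ j, (Polynomial.C (a j) + Polynomial.X * Polynomial.C (b j)) ^ 2
      = Polynomial.C (∑ j, a j ^ 2) + Polynomial.X * Polynomial.C (∑ j, 2 * a j * b j)
        + Polynomial.X ^ 2 * Polynomial.C (∑ j, b j ^ 2) := by
  rw [map_sum, map_sum, map_sum, Finset.mul_sum, Finset.mul_sum, ← Finset.sum_add_distrib,
    ← Finset.sum_add_distrib]
  apply Finset.sum_congr rfl
  intro j _
  simp only [map_pow, map_mul, map_add, map_ofNat]
  ring

lemma rootMult_key (w : ℂ) (hw : w ≠ 0) :
    Polynomial.rootMultiplicity Complex.I (Polynomial.C w * (Polynomial.X ^ 2 + 1)) = 1 := by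
  have hfac : (Polynomial.X ^ 2 + 1 : Polynomial ℂ)
      = (Polynomial.X - Polynomial.C Complex.I) * (Polynomial.X + Polynomial.C Complex.I) := by
    have : (Polynomial.X - Polynomial.C Complex.I) * (Polynomial.X + Polynomial.C Complex.I)
        = Polynomial.X ^ 2 - Polynomial.C Complex.I ^ 2 := by ring
    rw [this, ← map_pow, Complex.I_sq, map_neg, map_one]
    ring
  have h1 : (Polynomial.X - Polynomial.C Complex.I : Polynomial ℂ) ≠ 0 := Polynomial.X_sub_C_ne_zero _
  have h2 : (Polynomial.X + Polynomial.C Complex.I : Polynomial ℂ) ≠ 0 := by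
    intro hh
    have h := congrArg (Polynomial.eval 0) hh
    simp at h
  have hC : (Polynomial.C w : Polynomial ℂ) ≠ 0 := by simpa using hw
  have h3 : ¬ (Polynomial.X + Polynomial.C Complex.I).IsRoot Complex.I := by
    intro h
    simp only [Polynomial.IsRoot, Polynomial.eval_add, Polynomial.eval_X, Polynomial.eval_C] at h
    rw [add_self_eq_zero] at h
    exact Complex.I_ne_zero h
  have h4 : ¬ (Polynomial.C w).IsRoot Complex.I := by
    simpa [Polynomial.IsRoot] using hw
  rw [hfac, Polynomial.rootMultiplicity_mul (by exact mul_ne_zero hC (mul_ne_zero h1 h2)),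
    Polynomial.rootMultiplicity_mul (mul_ne_zero h1 h2),
    Polynomial.rootMultiplicity_X_sub_C_self,
    Polynomial.rootMultiplicity_eq_zero h3,
    Polynomial.rootMultiplicity_eq_zero h4]

end Rig3

namespace Rig4
open Rig Rig2 Rig3 Polynomial

variable {n d : ℕ}

lemma aeval_Qp' {R : Type*} [CommRing R] (x : Fin n × Fin d → R) (e : Fin n × Fin n) :
    aeval x (Qp d e) = ∑ j : Fin d, (x (e.1, j) - x (e.2, j)) ^ 2 := by
  simp [Qp]

lemma not_square (hd : 2 ≤ d) (p : Fin n × Fin d → ℝ) (hp : Generic p)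
    {T : Finset (Fin n × Fin n)} (hTne : T.Nonempty)
    (hTnorm : ∀ e ∈ T, e.1 < e.2) {x : ℝ} (hx : x ∈ K0 p) :
    x ^ 2 ≠ aeval p (∏ e ∈ T, Qp d e) := by
  intro heq
  obtain ⟨F, G, hGp, rfl⟩ := K0_repr p hx
  have hpoly : F ^ 2 = (∏ e ∈ T, Qp d e) * G ^ 2 := by
    by_contra hne
    apply hp _ (sub_ne_zero.2 hne)
    rw [map_sub, map_pow, map_mul, map_pow, sub_eq_zero]
    rw [div_pow] at heq
    field_simp at heq
    rw [heq, map_prod, mul_comm]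
  obtain ⟨e₀, he₀⟩ := hTne
  have hu₀w₀ : e₀.1 ≠ e₀.2 := ne_of_lt (hTnorm e₀ he₀)
  set c : Fin d → ℝ := fun j => p (e₀.1, j) - p (e₀.2, j) with hc
  have hc0 : ∀ j, c j ≠ 0 := by
    intro j h
    have hXne : (X (e₀.1, j) - X (e₀.2, j) : MvPolynomial (Fin n × Fin d) ℤ) ≠ 0 := by
      intro hh
      rw [sub_eq_zero] at hh
      exact (show ((e₀.1, j) : Fin n × Fin d) ≠ (e₀.2, j) by
        simp [Prod.ext_iff, hu₀w₀]) (MvPolynomial.X_injective hh)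
    apply hp _ hXne
    simpa using h
  obtain ⟨μ, hμ1, hμ2⟩ := exists_mu hd c (hc0 _)
  set m : Fin n × Fin d → ℝ := fun vj => if vj.1 = e₀.1 then μ vj.2 else 0 with hm
  set v : Fin n × Fin d → Polynomial ℂ :=
    fun vj => Polynomial.C ((p vj : ℝ) : ℂ) + Polynomial.X * Polynomial.C ((m vj : ℝ) : ℂ) with hv
  have heval : ∀ (z : ℂ) (P : MvPolynomial (Fin n × Fin d) ℤ), (aeval v P).eval z
      = aeval (fun vj => ((p vj : ℝ) : ℂ) + z * ((m vj : ℝ) : ℂ)) P := by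
    intro z P
    have hfun : (fun i => (v i).eval z)
        = (fun vj : Fin n × Fin d => ((p vj : ℝ) : ℂ) + z * ((m vj : ℝ) : ℂ)) := by
      funext vj
      rw [hv]
      simp
      ring
    rw [eval_aeval, hfun]
  have heval0 : ∀ P : MvPolynomial (Fin n × Fin d) ℤ,
      (aeval v P).eval 0 = ((aeval p P : ℝ) : ℂ) := by
    intro P
    rw [heval 0 P, ← cast_aeval p P]
    have hfun : (fun vj : Fin n × Fin d => ((p vj : ℝ) : ℂ) + 0 * ((m vj : ℝ) : ℂ))
        = (fun vj : Fin n × Fin d => ((p vj : ℝ) : ℂ)) := by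
      funext vj; simp
    rw [hfun]
  have hnz : ∀ P : MvPolynomial (Fin n × Fin d) ℤ, aeval p P ≠ 0 → aeval v P ≠ 0 := by
    intro P h hP0
    apply h
    have h2 := heval0 P
    rw [hP0] at h2
    simp only [Polynomial.eval_zero] at h2
    exact_mod_cast h2.symm
  have hevalI : ∀ f : Fin n × Fin n, (aeval v (Qp d f)).eval Complex.I
      = ((∑ j, ((p (f.1,j) - p (f.2,j)) ^ 2 - (m (f.1,j) - m (f.2,j)) ^ 2) : ℝ) : ℂ)
        + Complex.I * ((∑ j, 2 * (p (f.1,j) - p (f.2,j)) * (m (f.1,j) - m (f.2,j)) : ℝ) : ℂ) := by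
    intro f
    rw [heval Complex.I (Qp d f), aeval_Qp',
      ← csum (fun j => p (f.1,j) - p (f.2,j)) (fun j => m (f.1,j) - m (f.2,j))]
    apply Finset.sum_congr rfl
    intro j _
    push_cast
    ring
  have hQpe₀ : aeval p (Qp d e₀) = ∑ j, c j ^ 2 := by rw [aeval_Qp]
  have hSne : (∑ j, c j ^ 2) ≠ 0 := by
    rw [← hQpe₀]
    exact hp _ (Qp_ne_zero hd hu₀w₀)
  have hne_f : ∀ f ∈ T, f ≠ e₀ → (aeval v (Qp d f)).eval Complex.I ≠ 0 := by
    intro f hf hfe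
    rw [hevalI f]
    apply cne
    have hf12 : f.1 ≠ f.2 := ne_of_lt (hTnorm f hf)
    rw [Finset.sum_sub_distrib, ← aeval_Qp p f]
    by_cases h1 : f.1 = e₀.1 <;> by_cases h2 : f.2 = e₀.1
    · exact absurd (h1.trans h2.symm) hf12
    · have hmm : ∀ j, m (f.1, j) - m (f.2, j) = μ j := by
        intro j; simp [hm, h1, h2]
      rw [Finset.sum_congr rfl (fun j _ => by rw [hmm j]), hμ2, ← hQpe₀, ← map_sub]
      exact hp _ (sub_ne_zero.2 (Qp_injective hd (hTnorm f hf) (hTnorm e₀ he₀) hfe))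
    · have hmm : ∀ j, m (f.1, j) - m (f.2, j) = -μ j := by
        intro j; simp [hm, h1, h2]
      have hsq : ∀ j, (m (f.1, j) - m (f.2, j)) ^ 2 = μ j ^ 2 := by
        intro j; rw [hmm j]; ring
      rw [Finset.sum_congr rfl (fun j _ => by rw [hsq j]), hμ2, ← hQpe₀, ← map_sub]
      exact hp _ (sub_ne_zero.2 (Qp_injective hd (hTnorm f hf) (hTnorm e₀ he₀) hfe))
    · have hmm : ∀ j, m (f.1, j) - m (f.2, j) = 0 := by
        intro j; simp [hm, h1, h2]
      rw [Finset.sum_congr rfl (fun j _ => by rw [hmm j])]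
      simpa using hp _ (Qp_ne_zero hd hf12)
  have he₀poly : MvPolynomial.aeval v (Qp d e₀)
      = Polynomial.C ((∑ j, c j ^ 2 : ℝ) : ℂ) * (Polynomial.X ^ 2 + 1) := by
    have hterm : ∀ j : Fin d, v (e₀.1, j) - v (e₀.2, j)
        = Polynomial.C ((c j : ℝ) : ℂ) + Polynomial.X * Polynomial.C ((μ j : ℝ) : ℂ) := by
      intro j
      simp [hv, hm, Ne.symm hu₀w₀]
      rw [Complex.ofReal_sub, map_sub]
      ring
    have c1 : (∑ j, ((c j : ℝ) : ℂ) ^ 2) = ((∑ j, c j ^ 2 : ℝ) : ℂ) := by push_cast; ring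
    have c2 : (∑ j, 2 * ((c j : ℝ) : ℂ) * ((μ j : ℝ) : ℂ)) = 0 := by
      have e1 : ∀ j : Fin d, 2 * ((c j : ℝ) : ℂ) * ((μ j : ℝ) : ℂ)
          = ((2 * (c j * μ j) : ℝ) : ℂ) := fun j => by push_cast; ring
      rw [Finset.sum_congr rfl (fun j _ => e1 j), ← Complex.ofReal_sum, ← Finset.mul_sum, hμ1]
      simp
    have c3 : (∑ j, ((μ j : ℝ) : ℂ) ^ 2) = ((∑ j, c j ^ 2 : ℝ) : ℂ) := by
      rw [← hμ2]; push_cast; ring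
    calc MvPolynomial.aeval v (Qp d e₀)
        = ∑ j, (Polynomial.C ((c j : ℝ) : ℂ) + Polynomial.X * Polynomial.C ((μ j : ℝ) : ℂ)) ^ 2 := by
          simp only [Qp, map_sum, map_pow, map_sub, MvPolynomial.aeval_X]
          exact Finset.sum_congr rfl (fun j _ => by rw [hterm j])
      _ = Polynomial.C (∑ j, ((c j : ℝ) : ℂ) ^ 2)
            + Polynomial.X * Polynomial.C (∑ j, 2 * ((c j : ℝ) : ℂ) * ((μ j : ℝ) : ℂ))
            + Polynomial.X ^ 2 * Polynomial.C (∑ j, ((μ j : ℝ) : ℂ) ^ 2) := polysq _ _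
      _ = Polynomial.C ((∑ j, c j ^ 2 : ℝ) : ℂ) * (Polynomial.X ^ 2 + 1) := by
          rw [c1, c2, c3, map_zero]
          generalize ((∑ j, c j ^ 2 : ℝ) : ℂ) = W
          ring
  -- assemble the contradiction
  have himg := congrArg (MvPolynomial.aeval v) hpoly
  rw [map_pow, map_mul, map_pow, map_prod, ← Finset.mul_prod_erase T _ he₀] at himg
  have hG' : MvPolynomial.aeval v G ≠ 0 := hnz G hGp
  have hrest_eval : (∏ f ∈ T.erase e₀, MvPolynomial.aeval v (Qp d f)).eval Complex.I ≠ 0 := by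
    rw [Polynomial.eval_prod]
    exact Finset.prod_ne_zero_iff.2
      (fun f hf => hne_f f (Finset.mem_of_mem_erase hf) (Finset.ne_of_mem_erase hf))
  have hrest : (∏ f ∈ T.erase e₀, MvPolynomial.aeval v (Qp d f)) ≠ 0 := by
    intro h; rw [h] at hrest_eval; simp at hrest_eval
  have hSneC : ((∑ j, c j ^ 2 : ℝ) : ℂ) ≠ 0 := by exact_mod_cast hSne
  have he₀ne : MvPolynomial.aeval v (Qp d e₀) ≠ 0 := by
    rw [he₀poly]
    apply mul_ne_zero (Polynomial.C_ne_zero.mpr hSneC)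
    intro h
    have h2 := congrArg (Polynomial.eval 0) h
    simp at h2
  have hRHS : (MvPolynomial.aeval v (Qp d e₀) * ∏ f ∈ T.erase e₀, MvPolynomial.aeval v (Qp d f)) * (MvPolynomial.aeval v G) ^ 2 ≠ 0 :=
    mul_ne_zero (mul_ne_zero he₀ne hrest) (pow_ne_zero 2 hG')
  have hF' : MvPolynomial.aeval v F ≠ 0 := by
    intro h
    apply hRHS
    rw [← himg, h]
    ring
  have key : ∀ (q r : Polynomial ℂ), q ≠ 0 → r ≠ 0 →
      Polynomial.rootMultiplicity Complex.I (q * r)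
        = Polynomial.rootMultiplicity Complex.I q + Polynomial.rootMultiplicity Complex.I r :=
    fun q r hq hr => Polynomial.rootMultiplicity_mul (mul_ne_zero hq hr)
  have hρe₀ : Polynomial.rootMultiplicity Complex.I (MvPolynomial.aeval v (Qp d e₀)) = 1 := by
    rw [he₀poly]; exact rootMult_key _ hSneC
  have hmultEq := congrArg (Polynomial.rootMultiplicity Complex.I) himg
  rw [sq, key _ _ hF' hF', sq, key _ _ (mul_ne_zero he₀ne hrest) (mul_ne_zero hG' hG'),
    key _ _ he₀ne hrest, key _ _ hG' hG', hρe₀,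
    show Polynomial.rootMultiplicity Complex.I (∏ f ∈ T.erase e₀, MvPolynomial.aeval v (Qp d f)) = 0
      from Polynomial.rootMultiplicity_eq_zero hrest_eval] at hmultEq
  omega

end Rig4

namespace Rig5
open Rig Rig2 Rig3 Rig4

variable {n d : ℕ}

/-- product of edge lengths over a set of edges -/
noncomputable def sP (p : Fin n × Fin d → ℝ) (T : Finset (Fin n × Fin n)) : ℝ :=
  ∏ e ∈ T, dst p e.1 e.2

/-- the tower of quadratic extensions -/
noncomputable def KS (p : Fin n × Fin d → ℝ) (S : Finset (Fin n × Fin n)) : Subfield ℝ :=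
  Subfield.closure (Set.range p ∪ (fun e : Fin n × Fin n => dst p e.1 e.2) '' ↑S)

lemma K0_le_KS (p : Fin n × Fin d → ℝ) (S : Finset (Fin n × Fin n)) : K0 p ≤ KS p S :=
  Subfield.closure_mono Set.subset_union_left

lemma KS_mono (p : Fin n × Fin d → ℝ) {S S' : Finset (Fin n × Fin n)} (h : S ⊆ S') :
    KS p S ≤ KS p S' :=
  Subfield.closure_mono (Set.union_subset_union_right _
    (Set.image_mono (by exact_mod_cast h)))

lemma dst_mem_KS (p : Fin n × Fin d → ℝ) {S : Finset (Fin n × Fin n)}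
    {e : Fin n × Fin n} (he : e ∈ S) : dst p e.1 e.2 ∈ KS p S :=
  Subfield.subset_closure (Set.mem_union_right _ ⟨e, by simpa using he, rfl⟩)

lemma sP_mem_KS (p : Fin n × Fin d → ℝ) {S T : Finset (Fin n × Fin n)} (hTS : T ⊆ S) :
    sP p T ∈ KS p S :=
  prod_mem (fun e he => dst_mem_KS p (hTS he))

lemma KS_empty (p : Fin n × Fin d → ℝ) : KS p ∅ = K0 p := by
  rw [KS, K0]
  congr 1
  simp

lemma KS_insert (p : Fin n × Fin d → ℝ) (e : Fin n × Fin n) (S : Finset (Fin n × Fin n)) :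
    KS p (insert e S) = Subfield.closure (↑(KS p S) ∪ {dst p e.1 e.2}) := by
  apply le_antisymm
  · rw [KS, Subfield.closure_le]
    rintro x (hx | hx)
    · exact Subfield.subset_closure (Set.mem_union_left _ (Subfield.subset_closure
        (Set.mem_union_left _ hx)))
    · obtain ⟨f, hf, rfl⟩ := hx
      rw [Finset.coe_insert, Set.mem_insert_iff] at hf
      rcases hf with rfl | hf
      · exact Subfield.subset_closure (Set.mem_union_right _ rfl)
      · exact Subfield.subset_closure (Set.mem_union_left _ (Subfield.subset_closure
          (Set.mem_union_right _ ⟨f, hf, rfl⟩)))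
  · rw [Subfield.closure_le]
    rintro x (hx | hx)
    · exact KS_mono p (Finset.subset_insert e S) hx
    · rw [Set.mem_singleton_iff] at hx
      rw [hx]
      exact dst_mem_KS p (Finset.mem_insert_self e S)

lemma sP_sq (p : Fin n × Fin d → ℝ) (T : Finset (Fin n × Fin n)) :
    sP p T ^ 2 = MvPolynomial.aeval p (∏ e ∈ T, Qp d e) := by
  rw [sP, map_prod, ← Finset.prod_pow]
  exact Finset.prod_congr rfl fun e _ => dst_sq p e

lemma dst_sq_mem_K0 (p : Fin n × Fin d → ℝ) (e : Fin n × Fin n) :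
    dst p e.1 e.2 ^ 2 ∈ K0 p := by
  rw [dst_sq]
  exact aeval_mem_K0 p _

/-- Key lemma: a product of edge lengths of edges outside `S` is not in `KS p S`. -/
lemma sP_not_mem (hd : 2 ≤ d) (p : Fin n × Fin d → ℝ) (hp : Generic p)
    (S : Finset (Fin n × Fin n)) :
    (∀ e ∈ S, e.1 < e.2) →
    ∀ T : Finset (Fin n × Fin n), (∀ e ∈ T, e.1 < e.2) → T.Nonempty → Disjoint S T →
      sP p T ∉ KS p S := by
  induction S using Finset.induction_on with
  | empty =>
      intro _ T hTnorm hTne _ hmem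
      rw [KS_empty] at hmem
      exact not_square hd p hp hTne hTnorm hmem (sP_sq p T)
  | @insert e₀ S' he₀ IH =>
      intro hSnorm T hTnorm hTne hdisj hmem
      have hS'norm : ∀ e ∈ S', e.1 < e.2 := fun e he => hSnorm e (Finset.mem_insert_of_mem he)
      have he₀norm : e₀.1 < e₀.2 := hSnorm e₀ (Finset.mem_insert_self _ _)
      set α : ℝ := dst p e₀.1 e₀.2 with hα
      have hα2 : α ^ 2 ∈ KS p S' := K0_le_KS p S' (dst_sq_mem_K0 p e₀)
      have hαnot : α ∉ KS p S' := by
        have := IH hS'norm {e₀} (by simpa using he₀norm) ⟨e₀, by simp⟩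
          (by simpa using he₀)
        simpa [sP] using this
      have hTdisj' : Disjoint S' T :=
        Finset.disjoint_of_subset_left (Finset.subset_insert e₀ S') hdisj
      have he₀T : e₀ ∉ T := by
        intro h
        exact (Finset.disjoint_left.1 hdisj (Finset.mem_insert_self _ _)) h
      rw [KS_insert] at hmem
      obtain ⟨a, b, ha, hb, hab⟩ := quad_repr (KS p S') α hα2 hαnot hmem
      have hQT : sP p T ^ 2 ∈ KS p S' :=
        K0_le_KS p S' (by rw [sP_sq]; exact aeval_mem_K0 p _)
      by_cases hb0 : b = 0
      · -- sP p T = a ∈ KS p S'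
        exact IH hS'norm T hTnorm hTne hTdisj' (by rw [hab, hb0, zero_mul, add_zero]; exact ha)
      by_cases ha0 : a = 0
      · -- sP p (insert e₀ T) = b * α² ∈ KS p S'
        apply IH hS'norm (insert e₀ T)
          (by intro e he; rcases Finset.mem_insert.1 he with rfl | he
              · exact he₀norm
              · exact hTnorm e he)
          ⟨e₀, Finset.mem_insert_self _ _⟩
          (by rw [Finset.disjoint_insert_right]
              exact ⟨by simpa using he₀, hTdisj'⟩)
        have : sP p (insert e₀ T) = b * α ^ 2 := by
          rw [sP, Finset.prod_insert he₀T, ← sP, hab, ha0, zero_add, ← hα]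
          ring
        rw [this]
        exact mul_mem hb hα2
      · -- α ∈ KS p S', contradiction
        apply hαnot
        have hx2 : a ^ 2 + 2 * a * b * α + b ^ 2 * α ^ 2 = sP p T ^ 2 := by
          rw [hab]; ring
        have : α = (sP p T ^ 2 - a ^ 2 - b ^ 2 * α ^ 2) / (2 * a * b) := by
          field_simp
          linarith [hx2]
        rw [this]
        exact div_mem (sub_mem (sub_mem hQT (pow_mem ha 2)) (mul_mem (pow_mem hb 2) hα2))
          (mul_mem (mul_mem (by exact_mod_cast intCast_mem (KS p S') 2 : (2:ℝ) ∈ KS p S') ha) hb)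

/-- Linear independence of the products of edge lengths over `K0`. -/
lemma indep (hd : 2 ≤ d) (p : Fin n × Fin d → ℝ) (hp : Generic p)
    (SS : Finset (Fin n × Fin n)) :
    (∀ e ∈ SS, e.1 < e.2) →
    ∀ c : Finset (Fin n × Fin n) → ℝ, (∀ S, c S ∈ K0 p) →
    (∑ S ∈ SS.powerset, c S * sP p S) = 0 → ∀ S ∈ SS.powerset, c S = 0 := by
  induction SS using Finset.induction_on with
  | empty =>
      intro _ c _ hsum S hS
      rw [Finset.powerset_empty, Finset.mem_singleton] at hS
      rw [Finset.powerset_empty, Finset.sum_singleton] at hsum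
      subst hS
      simpa [sP] using hsum
  | @insert f SS' hf IH =>
      intro hnorm c hc hsum S hS
      have hSS'norm : ∀ e ∈ SS', e.1 < e.2 := fun e he => hnorm e (Finset.mem_insert_of_mem he)
      have hfnorm : f.1 < f.2 := hnorm f (Finset.mem_insert_self _ _)
      have hinj : ∀ A ∈ SS'.powerset, ∀ B ∈ SS'.powerset, insert f A = insert f B → A = B := by
        intro A hA B hB hAB
        rw [Finset.mem_powerset] at hA hB
        have hfA : f ∉ A := fun h => hf (hA h)
        have hfB : f ∉ B := fun h => hf (hB h)
        rw [← Finset.erase_insert hfA, ← Finset.erase_insert hfB, hAB]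
      have hdisjoint : Disjoint SS'.powerset (Finset.image (insert f) SS'.powerset) := by
        rw [Finset.disjoint_right]
        intro A hA hA'
        obtain ⟨B, hB, rfl⟩ := Finset.mem_image.1 hA
        rw [Finset.mem_powerset] at hA'
        exact hf (hA' (Finset.mem_insert_self f B))
      rw [Finset.powerset_insert, Finset.sum_union hdisjoint, Finset.sum_image hinj] at hsum
      have hsum2 : (∑ S ∈ SS'.powerset, c S * sP p S)
          + dst p f.1 f.2 * (∑ S ∈ SS'.powerset, c (insert f S) * sP p S) = 0 := by
        rw [← hsum, Finset.mul_sum]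
        congr 1
        apply Finset.sum_congr rfl
        intro A hA
        have hfA : f ∉ A := fun h => hf (Finset.mem_powerset.1 hA h)
        rw [show sP p (insert f A) = dst p f.1 f.2 * sP p A from by
          rw [sP, Finset.prod_insert hfA, ← sP]]
        ring
      set A := ∑ S ∈ SS'.powerset, c S * sP p S with hA
      set B := ∑ S ∈ SS'.powerset, c (insert f S) * sP p S with hB
      have hmemA : A ∈ KS p SS' := by
        apply sum_mem
        intro S hS'
        exact mul_mem (K0_le_KS p SS' (hc S)) (sP_mem_KS p (Finset.mem_powerset.1 hS'))
      have hmemB : B ∈ KS p SS' := by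
        apply sum_mem
        intro S hS'
        exact mul_mem (K0_le_KS p SS' (hc _)) (sP_mem_KS p (Finset.mem_powerset.1 hS'))
      have hαnot : dst p f.1 f.2 ∉ KS p SS' := by
        have := sP_not_mem hd p hp SS' hSS'norm {f} (by simpa using hfnorm) ⟨f, by simp⟩
          (by simpa using hf)
        simpa [sP] using this
      have hB0 : B = 0 := by
        by_contra hB0
        apply hαnot
        have : dst p f.1 f.2 = -A / B := by
          field_simp
          linarith [hsum2]
        rw [this]
        exact div_mem (neg_mem hmemA) hmemB
      have hA0 : A = 0 := by
        rw [hB0, mul_zero, add_zero] at hsum2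
        exact hsum2
      have IH1 := IH hSS'norm c hc hA0
      have IH2 := IH hSS'norm (fun S => c (insert f S)) (fun S => hc _) hB0
      rw [Finset.powerset_insert, Finset.mem_union] at hS
      rcases hS with hS | hS
      · exact IH1 S hS
      · obtain ⟨B', hB', rfl⟩ := Finset.mem_image.1 hS
        exact IH2 B' hB'

end Rig5

namespace Rig6
open Rig Rig2 Rig3 Rig4 Rig5

variable {n d : ℕ}

/-- span of products of edge lengths over subsets of `W` -/
noncomputable def M (p : Fin n × Fin d → ℝ) (W : Finset (Fin n × Fin n)) :
    Submodule ↥(K0 p) ℝ :=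
  Submodule.span ↥(K0 p) (sP p '' {S : Finset (Fin n × Fin n) | S ⊆ W})

lemma sP_mem_M (p : Fin n × Fin d → ℝ) {W S : Finset (Fin n × Fin n)} (h : S ⊆ W) :
    sP p S ∈ M p W :=
  Submodule.subset_span ⟨S, h, rfl⟩

lemma M_mono (p : Fin n × Fin d → ℝ) {W W' : Finset (Fin n × Fin n)} (h : W ⊆ W') :
    M p W ≤ M p W' :=
  Submodule.span_mono (Set.image_mono (fun S hS => hS.trans h))

lemma smul_eq_mul_K0 (p : Fin n × Fin d → ℝ) (k : ↥(K0 p)) (x : ℝ) : k • x = ↑k * x := rfl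

lemma mul_sP_sP (p : Fin n × Fin d → ℝ) (S T : Finset (Fin n × Fin n)) :
    sP p S * sP p T = (sP p (S ∩ T)) ^ 2 * sP p ((S \ T) ∪ (T \ S)) := by
  have hS : sP p S = sP p (S \ T) * sP p (S ∩ T) := by
    rw [sP, sP, sP, ← Finset.prod_union
      (Finset.disjoint_of_subset_right Finset.inter_subset_right Finset.sdiff_disjoint),
      Finset.sdiff_union_inter]
  have hT : sP p T = sP p (T \ S) * sP p (T ∩ S) := by
    rw [sP, sP, sP, ← Finset.prod_union
      (Finset.disjoint_of_subset_right Finset.inter_subset_right Finset.sdiff_disjoint),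
      Finset.sdiff_union_inter]
  have hd2 : Disjoint (S \ T) (T \ S) := by
    rw [Finset.disjoint_left]
    intro a ha hb
    exact (Finset.mem_sdiff.1 ha).2 (Finset.mem_sdiff.1 hb).1
  have hu : sP p ((S \ T) ∪ (T \ S)) = sP p (S \ T) * sP p (T \ S) := by
    rw [sP, sP, sP, Finset.prod_union hd2]
  rw [hS, hT, hu, Finset.inter_comm T S]
  ring

lemma sP_sq_mem_K0 (p : Fin n × Fin d → ℝ) (S : Finset (Fin n × Fin n)) :
    sP p S ^ 2 ∈ K0 p := by
  rw [sP, ← Finset.prod_pow]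
  exact prod_mem fun e _ => dst_sq_mem_K0 p e

lemma mul_mem_M (p : Fin n × Fin d → ℝ) {W : Finset (Fin n × Fin n)} {x y : ℝ}
    (hx : x ∈ M p W) (hy : y ∈ M p W) : x * y ∈ M p W := by
  induction hx using Submodule.span_induction with
  | mem x hxg =>
      induction hy using Submodule.span_induction with
      | mem y hyg =>
          obtain ⟨S, hS, rfl⟩ := hxg
          obtain ⟨T, hT, rfl⟩ := hyg
          rw [mul_sP_sP p S T]
          have : ((S \ T) ∪ (T \ S)) ⊆ W :=
            Finset.union_subset (Finset.sdiff_subset.trans hS) (Finset.sdiff_subset.trans hT)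
          exact Submodule.smul_mem _ ⟨_, sP_sq_mem_K0 p (S ∩ T)⟩ (sP_mem_M p this)
      | zero => rw [mul_zero]; exact zero_mem _
      | add y z hy hz hy' hz' => rw [mul_add]; exact add_mem hy' hz'
      | smul k y hy hy' =>
          have hre : x * (k • y) = k • (x * y) := by
            rw [smul_eq_mul_K0, smul_eq_mul_K0]; ring
          rw [hre]
          exact Submodule.smul_mem _ k hy'
  | zero => rw [zero_mul]; exact zero_mem _
  | add x z hx hz hx' hz' => rw [add_mul]; exact add_mem hx' hz'
  | smul k x hx hx' =>
      have hre : (k • x) * y = k • (x * y) := by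
        rw [smul_eq_mul_K0, smul_eq_mul_K0]; ring
      rw [hre]
      exact Submodule.smul_mem _ k hx'

lemma prod_mem_M (p : Fin n × Fin d → ℝ) {W : Finset (Fin n × Fin n)}
    {ι : Type*} (s : Finset ι) (g : ι → ℝ) (h : ∀ i ∈ s, g i ∈ M p W) :
    (∏ i ∈ s, g i) ∈ M p W := by
  refine Finset.prod_induction g (· ∈ M p W) (fun a b ha hb => mul_mem_M p ha hb) ?_ h
  have : sP p (∅ : Finset (Fin n × Fin n)) = 1 := by simp [sP]
  rw [← this]
  exact sP_mem_M p (Finset.empty_subset W)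

end Rig6

open Rig Rig2 Rig3 Rig4 Rig5 Rig6


/-- If `E_H` and `E_G` are disjoint edge sets and `A` is a square matrix of order
`|E_H|` with entries in `ℒ(E_G)`, then for any generic configuration `p` the matrix
`D(H,p) + A(p)` is invertible, where `D(H,p)` is the diagonal matrix of the edge
lengths of `H`. -/
theorem stmt_14 {n d : ℕ} (hd : 2 ≤ d) (EH EG : Finset (Fin n × Fin n))
    (hH : Normalized EH) (hG : Normalized EG) (hdisj : Disjoint EH EG)
    (A : ↥EH → ↥EH → (Fin n × Fin d → ℝ) → ℝ)
    (hA : ∀ i j, MemL EG (A i j))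
    (p : Fin n × Fin d → ℝ) (hp : Generic p) :
    IsUnit (Matrix.diagonal (fun e : ↥EH => dst p e.1.1 e.1.2) +
      Matrix.of (fun i j : ↥EH => A i j p)) := by
  classical
  rw [Matrix.isUnit_iff_isUnit_det, isUnit_iff_ne_zero]
  intro hdet
  set B := Matrix.diagonal (fun e : ↥EH => dst p e.1.1 e.1.2) +
      Matrix.of (fun i j : ↥EH => A i j p) with hB
  set Estar : Finset (Fin n × Fin n) := EH ∪ EG with hEstar
  have hnorm : ∀ e ∈ Estar, e.1 < e.2 := fun e he =>
    (Finset.mem_union.1 he).elim (hH e) (hG e)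
  set gens : Finset (Finset (Fin n × Fin n)) := Estar.powerset.erase EH with hgens
  set M' : Submodule ↥(K0 p) ℝ :=
    Submodule.span ↥(K0 p) (Set.range (fun S : ↥gens => sP p ↑S)) with hM'
  -- entries of A are in M p EG
  have hAij : ∀ i j : ↥EH, A i j p ∈ M p EG := by
    intro i j
    obtain ⟨P, Q, hQ, hrep⟩ := hA i j
    rw [hrep p]
    apply sum_mem
    intro F hF
    have hcoeff : (MvPolynomial.aeval p (P F) / MvPolynomial.aeval p (Q F)) ∈ K0 p :=
      div_mem (aeval_mem_K0 p _) (aeval_mem_K0 p _)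
    have h2 : (MvPolynomial.aeval p (P F) / MvPolynomial.aeval p (Q F)) *
        (∏ e ∈ F, dst p e.1 e.2)
        = (⟨_, hcoeff⟩ : ↥(K0 p)) • sP p F := rfl
    rw [h2]
    exact Submodule.smul_mem _ _ (sP_mem_M p (Finset.mem_powerset.1 hF))
  -- diagonal entries
  have hdiag : ∀ i : ↥EH, B i i = dst p (i : Fin n × Fin n).1 (i : Fin n × Fin n).2 + A i i p := by
    intro i
    rw [hB]
    simp [Matrix.add_apply, Matrix.diagonal_apply_eq, Matrix.of_apply]
  have hoff : ∀ i j : ↥EH, i ≠ j → B i j = A i j p := by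
    intro i j hij
    rw [hB]
    simp [Matrix.add_apply, Matrix.diagonal_apply_ne _ hij, Matrix.of_apply]
  -- reduction of M p W to M'
  have hMle : ∀ W : Finset (Fin n × Fin n), W ⊆ Estar → ¬ EH ⊆ W → M p W ≤ M' := by
    intro W hWE hWH
    rw [M, Submodule.span_le]
    rintro x ⟨S, hS, rfl⟩
    have hSW : S ⊆ W := hS
    have h1 : S ∈ gens := by
      rw [hgens, Finset.mem_erase, Finset.mem_powerset]
      exact ⟨by rintro rfl; exact hWH hSW, hSW.trans hWE⟩
    exact Submodule.subset_span ⟨⟨S, h1⟩, rfl⟩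
  -- the identity-permutation term
  have hid : (Equiv.Perm.sign (1 : Equiv.Perm ↥EH)) • ∏ i : ↥EH, B ((1 : Equiv.Perm ↥EH) i) i
      = ∏ i : ↥EH, (dst p (i : Fin n × Fin n).1 (i : Fin n × Fin n).2 + A i i p) := by
    rw [map_one, one_smul]
    exact Finset.prod_congr rfl fun i _ => by rw [Equiv.Perm.one_apply]; exact hdiag i
  have hunivmem : (Finset.univ : Finset ↥EH) ∈ (Finset.univ : Finset ↥EH).powerset :=
    Finset.mem_powerset.2 (Finset.Subset.refl _)
  have huniv : (∏ i ∈ (Finset.univ : Finset ↥EH),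
        dst p (i : Fin n × Fin n).1 (i : Fin n × Fin n).2)
      * (∏ i ∈ (Finset.univ : Finset ↥EH) \ (Finset.univ : Finset ↥EH), A i i p) = sP p EH := by
    rw [Finset.sdiff_self, Finset.prod_empty, mul_one, sP]
    exact Finset.prod_coe_sort EH (fun e => dst p e.1 e.2)
  have hdet_eq : B.det = sP p EH +
      ((∑ t ∈ (Finset.univ : Finset ↥EH).powerset.erase Finset.univ,
          (∏ i ∈ t, dst p (i : Fin n × Fin n).1 (i : Fin n × Fin n).2)
            * ∏ i ∈ (Finset.univ : Finset ↥EH) \ t, A i i p)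
        + ∑ σ ∈ (Finset.univ : Finset (Equiv.Perm ↥EH)).erase 1,
            Equiv.Perm.sign σ • ∏ i : ↥EH, B (σ i) i) := by
    rw [Matrix.det_apply, ← Finset.add_sum_erase _ _ (Finset.mem_univ (1 : Equiv.Perm ↥EH)),
      hid, Finset.prod_add, ← Finset.add_sum_erase _ _ hunivmem, huniv, add_assoc]
  -- membership of the remainder terms
  have hR1 : ∀ t ∈ (Finset.univ : Finset ↥EH).powerset.erase Finset.univ,
      (∏ i ∈ t, dst p (i : Fin n × Fin n).1 (i : Fin n × Fin n).2)
        * (∏ i ∈ (Finset.univ : Finset ↥EH) \ t, A i i p) ∈ M' := by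
    intro t ht
    rw [Finset.mem_erase] at ht
    obtain ⟨htne, _⟩ := ht
    set tE : Finset (Fin n × Fin n) := Finset.image Subtype.val t with htE
    obtain ⟨i₀, hi₀⟩ : ∃ i : ↥EH, i ∉ t := by
      by_contra h
      push_neg at h
      exact htne (Finset.eq_univ_iff_forall.2 h)
    have htEEH : tE ⊆ EH := by
      intro x hx
      obtain ⟨i, _, rfl⟩ := Finset.mem_image.1 hx
      exact i.2
    have hWE : tE ∪ EG ⊆ Estar := Finset.union_subset_union htEEH (Finset.Subset.refl EG)
    have hWH : ¬ EH ⊆ tE ∪ EG := by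
      intro hsub
      rcases Finset.mem_union.1 (hsub i₀.2) with h | h
      · obtain ⟨j, hj, hval⟩ := Finset.mem_image.1 h
        exact hi₀ (by rwa [Subtype.ext hval] at hj)
      · exact Finset.disjoint_left.1 hdisj i₀.2 h
    apply hMle _ hWE hWH
    apply mul_mem_M p
    · have : (∏ i ∈ t, dst p (i : Fin n × Fin n).1 (i : Fin n × Fin n).2) = sP p tE := by
        rw [sP, htE, Finset.prod_image (fun x _ y _ h => Subtype.ext h)]
      rw [this]
      exact sP_mem_M p Finset.subset_union_left
    · exact prod_mem_M p _ _ fun i _ => M_mono p Finset.subset_union_right (hAij i i)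
  have hR2 : ∀ σ ∈ (Finset.univ : Finset (Equiv.Perm ↥EH)).erase 1,
      (Equiv.Perm.sign σ • ∏ i : ↥EH, B (σ i) i) ∈ M' := by
    intro σ hσ
    rw [Finset.mem_erase] at hσ
    obtain ⟨hσne, _⟩ := hσ
    obtain ⟨i₀, hi₀⟩ : ∃ i : ↥EH, σ i ≠ i := by
      by_contra h
      push_neg at h
      exact hσne (Equiv.ext h)
    set fixE : Finset (Fin n × Fin n) :=
      Finset.image Subtype.val (Finset.univ.filter fun i : ↥EH => σ i = i) with hfixE
    have hWE : fixE ∪ EG ⊆ Estar := by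
      apply Finset.union_subset_union _ (Finset.Subset.refl EG)
      intro x hx
      obtain ⟨i, _, rfl⟩ := Finset.mem_image.1 hx
      exact i.2
    have hWH : ¬ EH ⊆ fixE ∪ EG := by
      intro hsub
      rcases Finset.mem_union.1 (hsub i₀.2) with h | h
      · obtain ⟨j, hj, hval⟩ := Finset.mem_image.1 h
        rw [Finset.mem_filter] at hj
        exact hi₀ (by rw [← Subtype.ext hval]; exact hj.2)
      · exact Finset.disjoint_left.1 hdisj i₀.2 h
    have hx : (∏ i : ↥EH, B (σ i) i) ∈ M p (fixE ∪ EG) := by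
      apply prod_mem_M p
      intro i _
      by_cases h : σ i = i
      · rw [h, hdiag i]
        apply add_mem
        · have : dst p (i : Fin n × Fin n).1 (i : Fin n × Fin n).2 = sP p {(i : Fin n × Fin n)} := by
            rw [sP, Finset.prod_singleton]
          rw [this]
          apply sP_mem_M p
          intro x hx
          rw [Finset.mem_singleton] at hx
          subst hx
          exact Finset.mem_union_left _ (Finset.mem_image.2 ⟨i, Finset.mem_filter.2
            ⟨Finset.mem_univ _, h⟩, rfl⟩)
        · exact M_mono p Finset.subset_union_right (hAij i i)
      · rw [hoff (σ i) i (fun hh => h hh)]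
        exact M_mono p Finset.subset_union_right (hAij (σ i) i)
    have hx' : (∏ i : ↥EH, B (σ i) i) ∈ M' := hMle _ hWE hWH hx
    rcases Int.units_eq_one_or (Equiv.Perm.sign σ) with h | h
    · rw [h, one_smul]; exact hx'
    · rw [h]
      have : ((-1 : ℤˣ) : ℤˣ) • (∏ i : ↥EH, B (σ i) i) = -(∏ i : ↥EH, B (σ i) i) := by
        simp [Units.smul_def]
      rw [this]
      exact neg_mem hx'
  -- hence sP p EH ∈ M'
  have hmem : sP p EH ∈ M' := by
    have h0 : sP p EH = -((∑ t ∈ (Finset.univ : Finset ↥EH).powerset.erase Finset.univ,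
          (∏ i ∈ t, dst p (i : Fin n × Fin n).1 (i : Fin n × Fin n).2)
            * ∏ i ∈ (Finset.univ : Finset ↥EH) \ t, A i i p)
        + ∑ σ ∈ (Finset.univ : Finset (Equiv.Perm ↥EH)).erase 1,
            Equiv.Perm.sign σ • ∏ i : ↥EH, B (σ i) i) := by
      rw [hdet_eq] at hdet
      linarith [hdet]
    rw [h0]
    exact neg_mem (add_mem (sum_mem hR1) (sum_mem hR2))
  -- contradiction with linear independence
  rw [hM', Submodule.mem_span_range_iff_exists_fun] at hmem
  obtain ⟨cf, hcf⟩ := hmem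
  set cc : Finset (Fin n × Fin n) → ℝ := fun S =>
    if h : S ∈ gens then (cf ⟨S, h⟩ : ℝ) else (if S = EH then -1 else 0) with hcc
  have hccK : ∀ S, cc S ∈ K0 p := by
    intro S
    rw [hcc]
    dsimp only
    split
    · exact (cf _).2
    · split
      · exact neg_mem (one_mem _)
      · exact zero_mem _
  have hEHgens : EH ∉ gens := Finset.notMem_erase _ _
  have hEHmem : EH ∈ Estar.powerset := Finset.mem_powerset.2 Finset.subset_union_left
  have hccEH : cc EH = -1 := by
    rw [hcc]; dsimp only; rw [dif_neg hEHgens, if_pos rfl]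
  have hsum0 : ∑ S ∈ Estar.powerset, cc S * sP p S = 0 := by
    rw [← Finset.insert_erase hEHmem, Finset.sum_insert (Finset.notMem_erase _ _), ← hgens]
    have h2 : ∑ S ∈ gens, cc S * sP p S = sP p EH := by
      rw [← hcf, Finset.univ_eq_attach, ← Finset.sum_attach gens (fun S => cc S * sP p S)]
      apply Finset.sum_congr rfl
      intro i _
      rw [hcc]
      dsimp only
      rw [dif_pos i.2]
      rfl
    rw [h2, hccEH]
    ring
  have hfin := indep hd p hp Estar hnorm cc hccK hsum0 EH hEHmem
  rw [hccEH] at hfin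
  norm_num at hfin
end
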